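/- For the unit ball K = {y ∈ ℝ^d : ‖y‖₂ ≤ 1} and the degree-one Fekete points given by the rows of X_d, the Lebesgue constant Λ₁ = max_{‖y‖₂ ≤ 1} Σ_{j=1}^{d+1} |λ_j(y)| satisfies √d ≤ Λ₁ ≤ √(d+1) for every d ≥ 1. -/

import Mathlib

/-!
By induction on `d`, the columns of `X = X_d` sum to zero and are pairwise orthogonal of squared
length `(d+1)/d`, so `Xᵀ X = ((d+1)/d) I`. Completing `X` by the all-ones column gives a square
matrix with orthogonal columns, hence with orthogonal rows, which yields
`X Xᵀ = ((d+1)/d) (I - 𝟙𝟙ᵀ/(d+1))`.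

Upper bound: `∑ λⱼ = 1` and `∑ λⱼ² = (1 + d‖y‖²)/(d+1) ≤ 1`, so Cauchy–Schwarz gives
`∑ |λⱼ| ≤ √(d+1)`. Lower bound: for the alternating sign vector `ε` we have `s = ∑ εⱼ ∈ {0, 1}`
and `d ‖Xᵀε‖² = (d+1)² - s²`; at `y = Xᵀε / ‖Xᵀε‖` we get
`∑ |λⱼ(y)| ≥ ⟨ε, λ(y)⟩ = (s + d ‖Xᵀε‖)/(d+1) ≥ √d`.
-/

open Matrix

/-- The recursively defined matrix `X_d ∈ ℝ^{(d+1)×d}` whose rows are the vertices of a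
regular simplex inscribed in the unit sphere of `ℝ^d`:  `X_1 = (-1; 1)`, and for `d > 1`,
the top-left `d × (d-1)` block of `X_d` is `R_d • X_{d-1}` with `R_d = √(d²-1)/d`, the last
column has its first `d` entries equal to `-1/d` and last entry `1`, and the last row is
`(0, …, 0, 1)`. -/
noncomputable def simplexPts : (d : ℕ) → Matrix (Fin (d + 1)) (Fin d) ℝ
  | 0 => fun _ j => j.elim0
  | 1 => fun i _ => if (i : ℕ) = 0 then -1 else 1
  | (d + 2) => fun i j =>
      if hj : (j : ℕ) < d + 1 then
        if hi : (i : ℕ) < d + 2 then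
          (Real.sqrt (((d : ℝ) + 2) ^ 2 - 1) / ((d : ℝ) + 2)) *
            simplexPts (d + 1) ⟨i, hi⟩ ⟨j, hj⟩
        else 0
      else if (i : ℕ) < d + 2 then -1 / ((d : ℝ) + 2) else 1

/-- The barycentric coordinates of `y ∈ ℝ^d` with respect to the rows of `X_d`:
`λ(y) = (1/(d+1)) 𝟙_{d+1} + (d/(d+1)) X_d y`.  These are also the values at `y` of the
degree-one fundamental Lagrange polynomials for interpolation at the rows of `X_d`. -/
noncomputable def bary (d : ℕ) (y : Fin d → ℝ) : Fin (d + 1) → ℝ :=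
  fun i => 1 / ((d : ℝ) + 1) + ((d : ℝ) / ((d : ℝ) + 1)) * (simplexPts d *ᵥ y) i

theorem dotProduct_self_eq_sum_sq {R ι : Type*} [CommSemiring R] [Fintype ι] (x : ι → R) :
    x ⬝ᵥ x = ∑ i, x i ^ 2 := by
  simp [dotProduct, sq]

section Completion

variable {K m n : Type*} [Field K] [Fintype m] [Fintype n] [DecidableEq m] [DecidableEq n]

theorem Matrix.inv_smul_mul_transpose_add_vecMulVec_eq_one (e : m ≃ n ⊕ Unit)
    (A : Matrix m n K) (u : m → K) {a b : K} (ha : a ≠ 0) (hb : b ≠ 0)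
    (hA : Aᵀ * A = a • 1) (hAu : Aᵀ *ᵥ u = 0) (hu : u ⬝ᵥ u = b) :
    a⁻¹ • (A * Aᵀ) + b⁻¹ • vecMulVec u u = 1 := by
  have hAu' (i : n) : ∑ j, A j i * u j = 0 := congrFun hAu i
  have key := (fromCols_mul_fromRows_eq_one_comm e (a⁻¹ • A) (replicateCol Unit (b⁻¹ • u))
    Aᵀ (replicateRow Unit u)).mpr
  rw [fromCols_mul_fromRows, smul_mul, ← vecMulVec_eq, smul_vecMulVec] at key
  refine key ?_
  rw [fromRows_mul_fromCols, ← fromBlocks_one]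
  congr 1
  · rw [Matrix.mul_smul, hA, smul_smul, inv_mul_cancel₀ ha, one_smul]
  · ext i j; simp [mul_apply, mul_left_comm _ b⁻¹, ← Finset.mul_sum, hAu']
  · ext i j; simp [mul_apply, mul_left_comm _ a⁻¹, ← Finset.mul_sum, mul_comm (u _), hAu']
  · ext i j
    simp only [mul_apply, replicateRow_apply, replicateCol_apply, Pi.smul_apply, smul_eq_mul,
      one_apply_eq, mul_left_comm _ b⁻¹, ← Finset.mul_sum]
    rw [← dotProduct, hu, inv_mul_cancel₀ hb]

end Completion

section SimplexBlocks

variable (d : ℕ)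

theorem simplexPts_castSucc_castSucc (i : Fin (d + 2)) (k : Fin (d + 1)) :
    simplexPts (d + 2) i.castSucc k.castSucc =
      Real.sqrt (((d : ℝ) + 2) ^ 2 - 1) / ((d : ℝ) + 2) * simplexPts (d + 1) i k := by
  simp [simplexPts, k.is_lt]

theorem simplexPts_last_castSucc (k : Fin (d + 1)) :
    simplexPts (d + 2) (Fin.last _) k.castSucc = 0 := by
  simp [simplexPts, k.is_lt]

theorem simplexPts_castSucc_last (i : Fin (d + 2)) :
    simplexPts (d + 2) i.castSucc (Fin.last _) = -1 / ((d : ℝ) + 2) := by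
  simp [simplexPts]

theorem simplexPts_last_last : simplexPts (d + 2) (Fin.last _) (Fin.last _) = 1 := by
  simp [simplexPts]

end SimplexBlocks

theorem sum_simplexPts_apply_eq_zero : ∀ (d : ℕ) (k : Fin d), ∑ i, simplexPts d i k = 0
  | 0, k => k.elim0
  | 1, k => by simp [simplexPts, Fin.sum_univ_succ]
  | d + 2, k => by
    cases k using Fin.lastCases with
    | cast k =>
      simp [Fin.sum_univ_castSucc, simplexPts_castSucc_castSucc, simplexPts_last_castSucc,
        ← Finset.mul_sum, sum_simplexPts_apply_eq_zero (d + 1) k]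
    | last =>
      simp [Fin.sum_univ_castSucc, simplexPts_castSucc_last, simplexPts_last_last]
      field_simp
      ring

theorem transpose_simplexPts_mulVec_one (d : ℕ) : (simplexPts d)ᵀ *ᵥ 1 = 0 := by
  ext k
  simpa [mulVec, dotProduct] using sum_simplexPts_apply_eq_zero d k

theorem transpose_simplexPts_mul_self :
    ∀ d : ℕ, (simplexPts d)ᵀ * simplexPts d = (((d : ℝ) + 1) / d) • 1
  | 0 => Subsingleton.elim _ _
  | 1 => by
    ext k l
    fin_cases k; fin_cases l
    simp only [mul_apply, transpose_apply]
    simp [simplexPts, Fin.sum_univ_succ]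
  | d + 2 => by
    have ih (k l : Fin (d + 1)) : ∑ i, simplexPts (d + 1) i k * simplexPts (d + 1) i l =
        if k = l then ((d : ℝ) + 2) / (d + 1) else 0 := by
      simpa [mul_apply, one_apply, add_assoc, one_add_one_eq_two] using
        congrFun₂ (transpose_simplexPts_mul_self (d + 1)) k l
    have hd : (d : ℝ) + 2 ≠ 0 := by positivity
    ext k l
    simp only [mul_apply, transpose_apply, Matrix.smul_apply, one_apply, smul_eq_mul, mul_ite,
      mul_one, mul_zero]
    rw [Fin.sum_univ_castSucc]
    cases k using Fin.lastCases with
    | cast k =>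
      cases l using Fin.lastCases with
      | cast l =>
        simp only [simplexPts_castSucc_castSucc, simplexPts_last_castSucc, mul_zero, add_zero,
          mul_mul_mul_comm _ (simplexPts _ _ k), ← Finset.mul_sum, ih, Fin.castSucc_inj]
        rw [← sq, div_pow, Real.sq_sqrt (by nlinarith [d.cast_nonneg (α := ℝ)])]
        split_ifs
        · push_cast; field_simp; ring
        · simp
      | last =>
        simp only [simplexPts_castSucc_castSucc, simplexPts_castSucc_last, simplexPts_last_castSucc,
          zero_mul, add_zero, mul_right_comm _ (simplexPts _ _ k), ← Finset.mul_sum,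
          sum_simplexPts_apply_eq_zero]
        simp [(Fin.castSucc_lt_last k).ne]
    | last =>
      cases l using Fin.lastCases with
      | cast l =>
        simp only [simplexPts_castSucc_castSucc, simplexPts_castSucc_last, simplexPts_last_castSucc,
          mul_zero, add_zero, ← Finset.mul_sum, sum_simplexPts_apply_eq_zero]
        simp [(Fin.castSucc_lt_last l).ne']
      | last =>
        simp only [simplexPts_castSucc_last, simplexPts_last_last, Finset.sum_const,
          Finset.card_univ, Fintype.card_fin, nsmul_eq_mul, if_true]
        push_cast; field_simp; ring

theorem simplexPts_mul_transpose (d : ℕ) (hd : d ≠ 0) :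
    simplexPts d * (simplexPts d)ᵀ =
      (((d : ℝ) + 1) / d) • (1 - ((d : ℝ) + 1)⁻¹ • vecMulVec 1 1) := by
  have ha : ((d : ℝ) + 1) / d ≠ 0 := div_ne_zero (by positivity) (by exact_mod_cast hd)
  have h := (simplexPts d).inv_smul_mul_transpose_add_vecMulVec_eq_one
    (Fintype.equivOfCardEq (by simp)) 1 ha (b := (d : ℝ) + 1) (by positivity)
    (transpose_simplexPts_mul_self d) (transpose_simplexPts_mulVec_one d)
    (by simp [one_dotProduct_one])
  rw [← h, add_sub_cancel_right, smul_smul, mul_inv_cancel₀ ha, one_smul]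

theorem mul_dotProduct_transpose_simplexPts_mulVec (d : ℕ) (hd : d ≠ 0) (v : Fin (d + 1) → ℝ) :
    d * ((simplexPts d)ᵀ *ᵥ v ⬝ᵥ (simplexPts d)ᵀ *ᵥ v) = (d + 1) * (v ⬝ᵥ v) - (∑ i, v i) ^ 2 := by
  have hJ : vecMulVec 1 1 *ᵥ v ⬝ᵥ v = (∑ i, v i) ^ 2 := by
    simp [vecMulVec_apply, mulVec, dotProduct, sq, Finset.mul_sum, mul_comm]
  rw [dotProduct_mulVec, vecMul_transpose, mulVec_mulVec, simplexPts_mul_transpose d hd,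
    smul_mulVec, sub_mulVec, smul_mulVec, one_mulVec, smul_dotProduct, sub_dotProduct,
    smul_dotProduct, hJ]
  have : (d : ℝ) ≠ 0 := by exact_mod_cast hd
  simp only [smul_eq_mul]
  field_simp

theorem sum_sq_bary (d : ℕ) (y : Fin d → ℝ) :
    ∑ j, bary d y j ^ 2 = 1 / ((d : ℝ) + 1) + (d / ((d : ℝ) + 1)) * ∑ k, y k ^ 2 := by
  obtain rfl | hd := eq_or_ne d 0
  · simp [bary]
  have hsum : ∑ j, (simplexPts d *ᵥ y) j = 0 := by
    rw [← one_dotProduct, dotProduct_mulVec, ← mulVec_transpose, transpose_simplexPts_mulVec_one,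
      zero_dotProduct]
  have hsq : ∑ j, (simplexPts d *ᵥ y) j ^ 2 = ((d : ℝ) + 1) / d * ∑ k, y k ^ 2 := by
    rw [← dotProduct_self_eq_sum_sq, ← dotProduct_self_eq_sum_sq, dotProduct_mulVec,
      ← mulVec_transpose, mulVec_mulVec, transpose_simplexPts_mul_self, smul_mulVec, one_mulVec,
      smul_dotProduct, smul_eq_mul]
  have : (d : ℝ) ≠ 0 := by exact_mod_cast hd
  simp only [bary, add_sq, Finset.sum_add_distrib, mul_pow, ← Finset.mul_sum, Finset.sum_const,
    Finset.card_univ, Fintype.card_fin, nsmul_eq_mul, mul_assoc, hsum, hsq]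
  push_cast
  field_simp
  ring

theorem sum_abs_bary_le (d : ℕ) (y : Fin d → ℝ) (hy : ∑ k, y k ^ 2 ≤ 1) :
    ∑ j, |bary d y j| ≤ Real.sqrt ((d : ℝ) + 1) := by
  refine (le_abs_self _).trans (Real.abs_le_sqrt ?_)
  calc (∑ j, |bary d y j|) ^ 2 ≤ ((d : ℝ) + 1) * ∑ j, |bary d y j| ^ 2 := by
        simpa [add_comm] using sq_sum_le_card_mul_sum_sq (s := .univ) (f := fun j => |bary d y j|)
    _ = ((d : ℝ) + 1) * (1 / ((d : ℝ) + 1) + (d / ((d : ℝ) + 1)) * ∑ k, y k ^ 2) := by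
        simp only [sq_abs, sum_sq_bary]
    _ ≤ ((d : ℝ) + 1) * (1 / ((d : ℝ) + 1) + (d / ((d : ℝ) + 1)) * 1) := by gcongr
    _ = (d : ℝ) + 1 := by field_simp; ring

theorem dotProduct_bary (d : ℕ) (v : Fin (d + 1) → ℝ) (y : Fin d → ℝ) :
    v ⬝ᵥ bary d y = (∑ i, v i) / ((d : ℝ) + 1) +
      (d / ((d : ℝ) + 1)) * ((simplexPts d)ᵀ *ᵥ v ⬝ᵥ y) := by
  have : bary d y = (1 / ((d : ℝ) + 1)) • 1 + (d / ((d : ℝ) + 1)) • (simplexPts d *ᵥ y) := by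
    ext j; simp [bary]
  rw [this, dotProduct_add, dotProduct_smul, dotProduct_smul, dotProduct_one, dotProduct_mulVec,
    ← mulVec_transpose, smul_eq_mul, smul_eq_mul]
  ring

theorem dotProduct_le_sum_abs {R ι : Type*} [Ring R] [LinearOrder R] [IsStrictOrderedRing R]
    [Fintype ι] {v : ι → R} (hv : ∀ i, |v i| ≤ 1) (x : ι → R) : v ⬝ᵥ x ≤ ∑ i, |x i| :=
  Finset.sum_le_sum fun i _ => (le_abs_self _).trans <| by
    rw [abs_mul]; exact mul_le_of_le_one_left (abs_nonneg _) (hv i)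

theorem sum_range_neg_one_pow_mem_Icc (n : ℕ) :
    ∑ i ∈ Finset.range n, (-1 : ℝ) ^ i ∈ Set.Icc 0 1 := by
  rw [geom_sum_eq (by norm_num)]
  rcases neg_one_pow_eq_or ℝ n with h | h <;> norm_num [h]

theorem sqrt_le_add_mul_of_mul_sq_eq {d s u : ℝ} (hd : 1 ≤ d) (hs : s ∈ Set.Icc 0 1) (hu : 0 ≤ u)
    (hdu : d * u ^ 2 = (d + 1) ^ 2 - s ^ 2) :
    Real.sqrt d ≤ s / (d + 1) + d / (d + 1) * u := by
  obtain ⟨hs0, hs1⟩ := hs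
  set v := Real.sqrt d
  have hv : v ^ 2 = d := Real.sq_sqrt (by linarith)
  have hv1 : 1 ≤ v := Real.one_le_sqrt.mpr hd
  rw [show s / (d + 1) + d / (d + 1) * u = (s + d * u) / (d + 1) by ring,
    le_div_iff₀ (by linarith)]
  set a := v * u
  have ha : (d + 1 - a) * (d + 1 + a) = s ^ 2 := by
    have : a ^ 2 = d * u ^ 2 := by rw [mul_pow, hv]
    nlinarith
  have hda : d * u = v * a := by rw [← hv]; ring
  have ha0 : 0 ≤ a := mul_nonneg (by linarith) hu
  have hvs : v * s ≤ d + 1 + a := by nlinarith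
  have key : v * (d + 1 - a) * (d + 1 + a) ≤ s * (d + 1 + a) := by
    rw [mul_assoc, ha]; nlinarith [mul_le_mul_of_nonneg_left hvs hs0]
  have : v * (d + 1 - a) ≤ s := le_of_mul_le_mul_right key (by linarith)
  nlinarith

theorem exists_sum_abs_bary_ge (d : ℕ) (hd : 1 ≤ d) :
    ∃ y : Fin d → ℝ, ∑ k, y k ^ 2 = 1 ∧ Real.sqrt d ≤ ∑ j, |bary d y j| := by
  set ε : Fin (d + 1) → ℝ := fun i => (-1) ^ (i : ℕ)
  have hε (i) : |ε i| = 1 := by simp [ε]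
  have hs : ∑ i, ε i ∈ Set.Icc 0 1 := by
    simpa [ε, Fin.sum_univ_eq_sum_range (fun i => (-1 : ℝ) ^ i)] using
      sum_range_neg_one_pow_mem_Icc (d + 1)
  set w := (simplexPts d)ᵀ *ᵥ ε
  have hd' : (1 : ℝ) ≤ d := by exact_mod_cast hd
  have hw : (d : ℝ) * (w ⬝ᵥ w) = (d + 1) ^ 2 - (∑ i, ε i) ^ 2 := by
    rw [mul_dotProduct_transpose_simplexPts_mulVec d (by omega)]
    have hεε : ε ⬝ᵥ ε = d + 1 := by simp [dotProduct, ε, ← mul_pow]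
    rw [hεε]
    ring
  have hw0 : 0 < w ⬝ᵥ w := by nlinarith [hs.2, hs.1]
  set u := Real.sqrt (w ⬝ᵥ w)
  have hu : u ^ 2 = w ⬝ᵥ w := Real.sq_sqrt hw0.le
  have hu0 : 0 < u := Real.sqrt_pos.mpr hw0
  refine ⟨u⁻¹ • w, ?_, ?_⟩
  · simp only [Pi.smul_apply, smul_eq_mul, mul_pow, ← Finset.mul_sum, inv_pow, hu]
    rw [← dotProduct_self_eq_sum_sq, inv_mul_cancel₀ hw0.ne']
  calc Real.sqrt d ≤ (∑ i, ε i) / ((d : ℝ) + 1) + (d / ((d : ℝ) + 1)) * u :=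
        sqrt_le_add_mul_of_mul_sq_eq hd' hs hu0.le (by rw [hu, hw])
    _ = ε ⬝ᵥ bary d (u⁻¹ • w) := by
        rw [dotProduct_bary, dotProduct_smul, ← hu, smul_eq_mul]
        field_simp
    _ ≤ ∑ j, |bary d (u⁻¹ • w) j| := dotProduct_le_sum_abs (fun i => (hε i).le) _

/-- for `K` the unit ball of `ℝ^d` and the degree-one Fekete points given by
the rows of `X_d`, the Lebesgue constant `Λ₁ = max_{‖y‖₂ ≤ 1} ∑ⱼ |λⱼ(y)|` satisfies
`√d ≤ Λ₁ ≤ √(d+1)` for every `d ≥ 1`. -/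
theorem sqrt_le_lebesgue_constant_le (d : ℕ) (hd : 1 ≤ d) :
    Real.sqrt d ≤
      sSup {t : ℝ | ∃ y : Fin d → ℝ, Real.sqrt (∑ k : Fin d, y k ^ 2) ≤ 1 ∧
        t = ∑ j : Fin (d + 1), |bary d y j|} ∧
    sSup {t : ℝ | ∃ y : Fin d → ℝ, Real.sqrt (∑ k : Fin d, y k ^ 2) ≤ 1 ∧
        t = ∑ j : Fin (d + 1), |bary d y j|} ≤ Real.sqrt ((d : ℝ) + 1) := by
  set S := {t : ℝ | ∃ y : Fin d → ℝ, Real.sqrt (∑ k : Fin d, y k ^ 2) ≤ 1 ∧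
    t = ∑ j : Fin (d + 1), |bary d y j|}
  have hS : ∀ t ∈ S, t ≤ Real.sqrt ((d : ℝ) + 1) := by
    rintro t ⟨y, hy, rfl⟩
    exact sum_abs_bary_le d y (Real.sqrt_le_one.mp hy)
  obtain ⟨y, hy, hle⟩ := exists_sum_abs_bary_ge d hd
  exact ⟨hle.trans (le_csSup ⟨_, hS⟩ ⟨y, by simp [hy], rfl⟩),
    csSup_le ⟨_, 0, by simp, rfl⟩ hS⟩
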